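/- arXiv:2008.00227 — 2 statements merged into one kernel-verified Lean document; each statement's English description precedes it below -/
import Mathlib

section
/- Let n ≥ 1 and k ≥ 1. In the ring of multivariate polynomials over ℚ in n variables, the complete homogeneous symmetric polynomial w_k of degree k satisfies w_k = Σ_{α ⊨ k} (h(α)/k!) · s_1^{α(1)} · s_2^{α(2)} ⋯ s_k^{α(k)}, where the sum runs over all partition symbols α of k and s_i denotes the i-th power sum polynomial (the same expansion as for the elementary symmetric polynomial but without the alternating sign). -/
open MvPolynomial

/-- The finite set of partition symbols of `k`: finitely supported functions
`α : ℕ → ℕ` with `α 0 = 0` and `∑ i, i · α i = k`. -/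
noncomputable def partitionSymbols (k : ℕ) : Finset (ℕ →₀ ℕ) :=
  ((Finset.range (k + 1)).finsupp fun _ => Finset.range (k + 1)).filter
    fun α => α 0 = 0 ∧ (α.sum fun i a => i * a) = k

/-- The Cauchy number `h(α) = k! / (∏ i, α i ! · i ^ α i)` of a partition symbol of `k`. -/
noncomputable def cauchyNumber (k : ℕ) (α : ℕ →₀ ℕ) : ℚ :=
  (k.factorial : ℚ) / (α.prod fun i a => (a.factorial : ℚ) * (i : ℚ) ^ a)


lemma aux_mem_partitionSymbols {k : ℕ} {α : ℕ →₀ ℕ} :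
    α ∈ partitionSymbols k ↔ α 0 = 0 ∧ (α.sum fun i a => i * a) = k := by
  constructor
  · exact fun h => (Finset.mem_filter.mp h).2
  · rintro ⟨h0, hs⟩
    have key : ∀ i, i * α i ≤ k := by
      intro i
      rcases Nat.eq_zero_or_pos (α i) with h | h
      · simp [h]
      · rw [← hs];
        refine Finset.single_le_sum (f := fun i => i * α i) (fun _ _ => Nat.zero_le _) ?_
        exact Finsupp.mem_support_iff.mpr (Nat.pos_iff_ne_zero.mp h)
    have hik : ∀ i, α i ≠ 0 → i ≤ k ∧ α i ≤ k := by
      intro i hi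
      have h1 : 1 ≤ i := by
        rcases Nat.eq_zero_or_pos i with rfl | h; · exact absurd h0 hi
        · exact h
      have h2 : 1 ≤ α i := Nat.pos_of_ne_zero hi
      constructor
      · calc i = i * 1 := (Nat.mul_one i).symm
          _ ≤ i * α i := Nat.mul_le_mul_left i h2
          _ ≤ k := key i
      · calc α i = 1 * α i := (Nat.one_mul _).symm
          _ ≤ i * α i := Nat.mul_le_mul_right _ h1
          _ ≤ k := key i
    refine Finset.mem_filter.mpr ⟨Finset.mem_finsupp_iff.mpr ⟨?_, ?_⟩, h0, hs⟩
    · intro i hi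
      have := (hik i (Finsupp.mem_support_iff.mp hi)).1
      exact Finset.mem_range.mpr (Nat.lt_succ_of_le this)
    · intro i _
      rcases Nat.eq_zero_or_pos (α i) with h | h
      · simp [h]
      · exact Finset.mem_range.mpr (Nat.lt_succ_of_le (hik i (Nat.pos_iff_ne_zero.mp h)).2)

lemma aux_support_subset {k : ℕ} {α : ℕ →₀ ℕ} (h : α ∈ partitionSymbols k) :
    α.support ⊆ Finset.Icc 1 k := by
  rw [aux_mem_partitionSymbols] at h
  intro i hi
  have hai := Finsupp.mem_support_iff.mp hi
  have h1 : 1 ≤ i := by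
    rcases Nat.eq_zero_or_pos i with rfl | h'; · exact absurd h.1 hai
    · exact h'
  have h2 : i * α i ≤ k := by
    rw [← h.2]
    exact Finset.single_le_sum (f := fun i => i * α i) (fun _ _ => Nat.zero_le _) hi
  refine Finset.mem_Icc.mpr ⟨h1, ?_⟩
  calc i = i * 1 := (Nat.mul_one i).symm
    _ ≤ i * α i := Nat.mul_le_mul_left i (Nat.pos_of_ne_zero hai)
    _ ≤ k := h2


lemma prod_shift {M : Type*} [CommMonoid M] (f : ℕ → ℕ → M) (h0 : ∀ j, f j 0 = 1)
    (β : ℕ →₀ ℕ) (i : ℕ) :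
    ∃ Q : M, (β + Finsupp.single i 1).prod f = f i (β i + 1) * Q ∧
      β.prod f = f i (β i) * Q := by
  classical
  set s : Finset ℕ := insert i β.support with hs
  have hβs : β.support ⊆ s := Finset.subset_insert _ _
  have hγs : (β + Finsupp.single i 1).support ⊆ s := by
    refine Finset.Subset.trans Finsupp.support_add ?_
    refine Finset.union_subset hβs ?_
    refine Finset.Subset.trans Finsupp.support_single_subset ?_
    simp [hs]
  have his : i ∈ s := Finset.mem_insert_self _ _
  refine ⟨∏ j ∈ s.erase i, f j (β j), ?_, ?_⟩
  · rw [Finsupp.prod_of_support_subset _ hγs f (fun j _ => h0 j)]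
    rw [← Finset.mul_prod_erase s _ his]
    have h1 : (β + Finsupp.single i 1 : ℕ →₀ ℕ) i = β i + 1 := by
      rw [Finsupp.add_apply, Finsupp.single_eq_same]
    rw [h1]
    congr 1
    refine Finset.prod_congr rfl fun j hj => ?_
    have hji : j ≠ i := Finset.ne_of_mem_erase hj
    simp [Finsupp.single_apply, hji.symm]
  · rw [Finsupp.prod_of_support_subset _ hβs f (fun j _ => h0 j)]
    rw [← Finset.mul_prod_erase s _ his]

lemma D_shift (i : ℕ) (β : ℕ →₀ ℕ) :
    (β + Finsupp.single i 1).prod (fun j a => (a.factorial : ℚ) * (j : ℚ) ^ a) =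
      ((i : ℚ) * (β i + 1)) * β.prod (fun j a => (a.factorial : ℚ) * (j : ℚ) ^ a) := by
  obtain ⟨Q, h1, h2⟩ := prod_shift (fun j a => (a.factorial : ℚ) * (j : ℚ) ^ a)
    (by intro j; simp) β i
  rw [h1, h2, Nat.factorial_succ, pow_succ]
  push_cast
  ring

lemma P_shift {σ : Type*} [Fintype σ] (i : ℕ) (β : ℕ →₀ ℕ) :
    (β + Finsupp.single i 1).prod (fun j a => psum σ ℚ j ^ a) =
      psum σ ℚ i * β.prod (fun j a => psum σ ℚ j ^ a) := by
  obtain ⟨Q, h1, h2⟩ := prod_shift (fun j a => psum σ ℚ j ^ a) (by intro j; simp) β i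
  rw [h1, h2, pow_succ]
  ring

noncomputable def Wsum (σ : Type*) [Fintype σ] (k : ℕ) : MvPolynomial σ ℚ :=
  ∑ α ∈ partitionSymbols k,
    (α.prod fun j a => (a.factorial : ℚ) * (j : ℚ) ^ a)⁻¹ •
      (α.prod fun j a => psum σ ℚ j ^ a)

lemma wsum_add_single_mem {k i : ℕ} (hi : i ∈ Finset.Icc 1 k) {β : ℕ →₀ ℕ}
    (hβ : β ∈ partitionSymbols (k - i)) :
    β + Finsupp.single i 1 ∈ partitionSymbols k := by
  obtain ⟨h1, hk⟩ := Finset.mem_Icc.mp hi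
  obtain ⟨h0, hs⟩ := aux_mem_partitionSymbols.mp hβ
  refine aux_mem_partitionSymbols.mpr ⟨?_, ?_⟩
  · rw [Finsupp.add_apply, h0, Finsupp.single_apply, if_neg (by omega : ¬ i = 0)]
    rfl
  · rw [Finsupp.sum_add_index' (fun j => Nat.mul_zero j) (fun j b c => Nat.mul_add j b c),
      Finsupp.sum_single_index (Nat.mul_zero i), hs]
    omega

lemma wsum_sub_single_mem {k i : ℕ} (hi : i ∈ Finset.Icc 1 k) {α : ℕ →₀ ℕ}
    (hα : α ∈ partitionSymbols k) (hne : α i ≠ 0) :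
    α - Finsupp.single i 1 ∈ partitionSymbols (k - i) ∧
      (α - Finsupp.single i 1) + Finsupp.single i 1 = α := by
  obtain ⟨h1, hk⟩ := Finset.mem_Icc.mp hi
  obtain ⟨h0, hs⟩ := aux_mem_partitionSymbols.mp hα
  have hle : Finsupp.single i 1 ≤ α := Finsupp.single_le_iff.mpr (Nat.one_le_iff_ne_zero.mpr hne)
  have hcancel : (α - Finsupp.single i 1) + Finsupp.single i 1 = α := tsub_add_cancel_of_le hle
  refine ⟨aux_mem_partitionSymbols.mpr ⟨?_, ?_⟩, hcancel⟩
  · have := congrArg (fun f : ℕ →₀ ℕ => f 0) hcancel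
    simp only [Finsupp.add_apply] at this
    rw [Finsupp.single_apply, if_neg (by omega)] at this
    omega
  · have := congrArg (fun f : ℕ →₀ ℕ => f.sum fun j a => j * a) hcancel
    rw [Finsupp.sum_add_index' (fun j => Nat.mul_zero j) (fun j b c => Nat.mul_add j b c),
      Finsupp.sum_single_index (Nat.mul_zero i), hs] at this
    have h2 : ((α - Finsupp.single i 1).sum fun i a => i * a) + i * 1 = k := this
    omega

lemma term_shift {σ : Type*} [Fintype σ] {i : ℕ} (hi : 1 ≤ i) (β : ℕ →₀ ℕ) :
    (((i : ℚ) * ((β + Finsupp.single i 1 : ℕ →₀ ℕ) i)) *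
        ((β + Finsupp.single i 1).prod fun j a => (a.factorial : ℚ) * (j : ℚ) ^ a)⁻¹) •
        ((β + Finsupp.single i 1).prod fun j a => psum σ ℚ j ^ a) =
      psum σ ℚ i * ((β.prod fun j a => (a.factorial : ℚ) * (j : ℚ) ^ a)⁻¹ •
        (β.prod fun j a => psum σ ℚ j ^ a)) := by
  have happ : (β + Finsupp.single i 1 : ℕ →₀ ℕ) i = β i + 1 := by
    rw [Finsupp.add_apply, Finsupp.single_eq_same]
  have hc : ((i : ℚ) * ((β i : ℚ) + 1)) ≠ 0 := by
    have : (i : ℚ) ≠ 0 := Nat.cast_ne_zero.mpr (by omega)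
    positivity
  rw [happ, D_shift, P_shift, mul_inv, ← mul_assoc]
  push_cast
  rw [mul_inv_cancel₀ hc, one_mul, mul_smul_comm]

lemma W_rec (σ : Type*) [Fintype σ] (k : ℕ) :
    (k : ℚ) • Wsum σ k = ∑ i ∈ Finset.Icc 1 k, psum σ ℚ i * Wsum σ (k - i) := by
  classical
  rw [Wsum, Finset.smul_sum]
  have step1 : ∀ α ∈ partitionSymbols k,
      (k : ℚ) • ((α.prod fun j a => (a.factorial : ℚ) * (j : ℚ) ^ a)⁻¹ •
        (α.prod fun j a => psum σ ℚ j ^ a)) =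
      ∑ i ∈ Finset.Icc 1 k,
        (((i : ℚ) * (α i)) * (α.prod fun j a => (a.factorial : ℚ) * (j : ℚ) ^ a)⁻¹) •
          (α.prod fun j a => psum σ ℚ j ^ a) := by
    intro α hα
    have hk : (k : ℚ) = ∑ i ∈ Finset.Icc 1 k, ((i : ℚ) * (α i)) := by
      have h0 : (α.sum fun i a => i * a) = k := (aux_mem_partitionSymbols.mp hα).2
      have hsupp := Finsupp.sum_of_support_subset α (aux_support_subset hα)
        (fun i a => i * a) (fun j _ => Nat.mul_zero j)
      have hkn : (∑ i ∈ Finset.Icc 1 k, i * α i) = k := by rw [← hsupp]; exact h0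
      calc (k : ℚ) = ((∑ i ∈ Finset.Icc 1 k, i * α i : ℕ) : ℚ) := by rw [hkn]
        _ = ∑ i ∈ Finset.Icc 1 k, ((i : ℚ) * (α i)) := by push_cast; rfl
    rw [hk, Finset.sum_smul]
    refine Finset.sum_congr rfl fun i _ => ?_
    rw [smul_smul]
  rw [Finset.sum_congr rfl step1, Finset.sum_comm]
  refine Finset.sum_congr rfl fun i hi => ?_
  have h1 : 1 ≤ i := (Finset.mem_Icc.mp hi).1
  rw [← Finset.sum_filter_of_ne (p := fun α => α i ≠ 0) (fun α _ hne => by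
    intro h0
    rw [h0] at hne
    simp at hne)]
  rw [Wsum, Finset.mul_sum]
  refine (Finset.sum_nbij' (fun α => α - Finsupp.single i 1) (fun β => β + Finsupp.single i 1)
    ?_ ?_ ?_ ?_ ?_).symm.symm
  · intro α hα
    obtain ⟨hα', hne⟩ := Finset.mem_filter.mp hα
    exact (wsum_sub_single_mem hi hα' hne).1
  · intro β hβ
    refine Finset.mem_filter.mpr ⟨wsum_add_single_mem hi hβ, ?_⟩
    rw [Finsupp.add_apply, Finsupp.single_eq_same]
    omega
  · intro α hα
    obtain ⟨hα', hne⟩ := Finset.mem_filter.mp hα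
    exact (wsum_sub_single_mem hi hα' hne).2
  · intro β _
    exact add_tsub_cancel_right _ _
  · intro α hα
    obtain ⟨hα', hne⟩ := Finset.mem_filter.mp hα
    conv_lhs => rw [← (wsum_sub_single_mem hi hα' hne).2]
    exact term_shift h1 _


lemma count_sum_univ {σ : Type*} [Fintype σ] [DecidableEq σ] (s : Multiset σ) :
    ∑ j : σ, s.count j = Multiset.card s := by
  rw [← Multiset.toFinset_sum_count_eq s]
  exact (Finset.sum_subset (Finset.subset_univ _) (fun x _ hx =>
    Multiset.count_eq_zero.mpr (fun h => hx (Multiset.mem_toFinset.mpr h)))).symm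

lemma key_j {σ : Type*} [Fintype σ] [DecidableEq σ] (k : ℕ) (j : σ) :
    ∑ i ∈ Finset.Icc 1 k, ∑ t : Sym σ (k - i), X (R := ℚ) j ^ i * (t.1.map X).prod =
      ∑ s : Sym σ k, (s.1.count j) • (s.1.map X).prod := by
  rw [Finset.sum_sigma' (Finset.Icc 1 k) (fun i => (Finset.univ : Finset (Sym σ (k - i))))]
  have expand : ∀ s : Sym σ k, (s.1.count j) • ((s.1.map X).prod : MvPolynomial σ ℚ) =
      ∑ i ∈ Finset.Icc 1 (s.1.count j), (s.1.map X).prod := by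
    intro s; rw [Finset.sum_const, Nat.card_Icc]; norm_num
  rw [Finset.sum_congr rfl fun s _ => expand s]
  rw [Finset.sum_sigma' (Finset.univ : Finset (Sym σ k)) (fun s => Finset.Icc 1 (s.1.count j))]
  refine Finset.sum_bij'
    (i := fun p hp => (⟨⟨p.2.1 + Multiset.replicate p.1 j, by
      rw [Multiset.card_add, p.2.2, Multiset.card_replicate]
      have := (Finset.mem_Icc.mp (Finset.mem_sigma.mp hp).1).2
      omega⟩, p.1⟩ : Σ _ : Sym σ k, ℕ))
    (j := fun q hq => (⟨q.2, ⟨q.1.1 - Multiset.replicate q.2 j, by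
      have hle : Multiset.replicate q.2 j ≤ q.1.1 :=
        Multiset.le_count_iff_replicate_le.mp (Finset.mem_Icc.mp (Finset.mem_sigma.mp hq).2).2
      rw [Multiset.card_sub hle, Multiset.card_replicate, q.1.2]⟩⟩ : Σ i : ℕ, Sym σ (k - i)))
    ?_ ?_ ?_ ?_ ?_
  · rintro ⟨i, t⟩ hp
    refine Finset.mem_sigma.mpr ⟨Finset.mem_univ _, Finset.mem_Icc.mpr ⟨?_, ?_⟩⟩
    · exact (Finset.mem_Icc.mp (Finset.mem_sigma.mp hp).1).1
    · show i ≤ Multiset.count j (t.1 + Multiset.replicate i j)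
      rw [Multiset.count_add, Multiset.count_replicate_self]
      exact Nat.le_add_left _ _
  · rintro ⟨s, i⟩ hq
    have h2 := (Finset.mem_Icc.mp (Finset.mem_sigma.mp hq).2)
    refine Finset.mem_sigma.mpr ⟨Finset.mem_Icc.mpr ⟨h2.1, ?_⟩, Finset.mem_univ _⟩
    calc i ≤ Multiset.count j s.1 := h2.2
      _ ≤ Multiset.card s.1 := Multiset.count_le_card _ _
      _ = k := s.2
  · rintro ⟨i, t⟩ hp
    refine Sigma.ext rfl (heq_of_eq (Subtype.ext ?_))
    exact add_tsub_cancel_right _ _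
  · rintro ⟨s, i⟩ hq
    have hle : Multiset.replicate i j ≤ s.1 :=
      Multiset.le_count_iff_replicate_le.mp (Finset.mem_Icc.mp (Finset.mem_sigma.mp hq).2).2
    refine Sigma.ext (Subtype.ext ?_) (by rfl)
    exact tsub_add_cancel_of_le hle
  · rintro ⟨i, t⟩ hp
    simp only [Multiset.map_add, Multiset.prod_add, Multiset.map_replicate,
      Multiset.prod_replicate]
    ring

lemma newton_hsymm (σ : Type*) [Fintype σ] [DecidableEq σ] (k : ℕ) :
    (k : ℚ) • hsymm σ ℚ k = ∑ i ∈ Finset.Icc 1 k, psum σ ℚ i * hsymm σ ℚ (k - i) := by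
  calc (k : ℚ) • hsymm σ ℚ k = k • hsymm σ ℚ k := Nat.cast_smul_eq_nsmul ℚ k _
    _ = ∑ s : Sym σ k, k • ((s.1.map X).prod : MvPolynomial σ ℚ) := by
        rw [hsymm, Finset.smul_sum]
    _ = ∑ s : Sym σ k, (∑ j : σ, s.1.count j) • ((s.1.map X).prod : MvPolynomial σ ℚ) := by
        refine Finset.sum_congr rfl fun s _ => ?_
        rw [count_sum_univ, s.2]
    _ = ∑ s : Sym σ k, ∑ j : σ, (s.1.count j) • ((s.1.map X).prod : MvPolynomial σ ℚ) := by
        refine Finset.sum_congr rfl fun s _ => ?_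
        rw [Finset.sum_smul]
    _ = ∑ j : σ, ∑ s : Sym σ k, (s.1.count j) • ((s.1.map X).prod : MvPolynomial σ ℚ) :=
        Finset.sum_comm
    _ = ∑ j : σ, ∑ i ∈ Finset.Icc 1 k, ∑ t : Sym σ (k - i),
          X (R := ℚ) j ^ i * (t.1.map X).prod := by
        exact Finset.sum_congr rfl fun j _ => (key_j k j).symm
    _ = ∑ i ∈ Finset.Icc 1 k, ∑ j : σ, ∑ t : Sym σ (k - i),
          X (R := ℚ) j ^ i * (t.1.map X).prod := Finset.sum_comm
    _ = ∑ i ∈ Finset.Icc 1 k, psum σ ℚ i * hsymm σ ℚ (k - i) := by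
        refine Finset.sum_congr rfl fun i _ => ?_
        rw [psum, hsymm, Finset.sum_mul_sum]


lemma partitionSymbols_zero : partitionSymbols 0 = {0} := by
  ext α
  rw [aux_mem_partitionSymbols, Finset.mem_singleton]
  constructor
  · rintro ⟨h0, hs⟩
    ext i
    by_contra hne
    have hne' : α i ≠ 0 := fun h => hne (by simp [h])
    have hi : i ∈ α.support := Finsupp.mem_support_iff.mpr hne'
    have h1 : 1 ≤ i := by
      rcases Nat.eq_zero_or_pos i with rfl | h'
      · exact absurd h0 hne'
      · exact h'
    have : i * α i ≤ 0 := by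
      rw [← hs]
      exact Finset.single_le_sum (f := fun i => i * α i) (fun _ _ => Nat.zero_le _) hi
    have := Nat.le_zero.mp this
    exact hne' (by
      rcases Nat.mul_eq_zero.mp this with h' | h'
      · omega
      · exact h')
  · rintro rfl
    simp

lemma Wsum_zero (σ : Type*) [Fintype σ] : Wsum σ 0 = 1 := by
  rw [Wsum, partitionSymbols_zero, Finset.sum_singleton]
  simp

lemma hsymm_eq_Wsum (σ : Type*) [Fintype σ] [DecidableEq σ] (k : ℕ) :
    hsymm σ ℚ k = Wsum σ k := by
  induction k using Nat.strong_induction_on with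
  | _ k ih =>
    rcases Nat.eq_zero_or_pos k with rfl | hk
    · rw [hsymm_zero, Wsum_zero]
    · have h := newton_hsymm σ k
      have key : ∀ i ∈ Finset.Icc 1 k,
          psum σ ℚ i * hsymm σ ℚ (k - i) = psum σ ℚ i * Wsum σ (k - i) := by
        intro i hi
        have h1 := (Finset.mem_Icc.mp hi).1
        rw [ih (k - i) (by omega)]
      rw [Finset.sum_congr rfl key, ← W_rec σ k] at h
      have hk' : (k : ℚ) ≠ 0 := Nat.cast_ne_zero.mpr (by omega)
      calc hsymm σ ℚ k = (k : ℚ)⁻¹ • ((k : ℚ) • hsymm σ ℚ k) := by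
            rw [smul_smul, inv_mul_cancel₀ hk', one_smul]
        _ = (k : ℚ)⁻¹ • ((k : ℚ) • Wsum σ k) := by rw [h]
        _ = Wsum σ k := by rw [smul_smul, inv_mul_cancel₀ hk', one_smul]

/-- The complete homogeneous symmetric polynomial is a linear combination of products of power sums,
with coefficients given by the Cauchy enumeration formula (no alternating sign):
`w_k = ∑_{α ⊨ k} (h α / k!) · s_1 ^ α 1 ⋯ s_k ^ α k`. -/
theorem hsymm_eq_sum_partitionSymbols (n k : ℕ) (hn : 1 ≤ n) (hk : 1 ≤ k) :
    hsymm (Fin n) ℚ k =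
      ∑ α ∈ partitionSymbols k,
        (cauchyNumber k α / (k.factorial : ℚ)) •
          (α.prod fun i a => psum (Fin n) ℚ i ^ a) := by
  have coeff_eq : ∀ α : ℕ →₀ ℕ, cauchyNumber k α / (k.factorial : ℚ) =
      (α.prod fun j a => (a.factorial : ℚ) * (j : ℚ) ^ a)⁻¹ := by
    intro α
    rw [cauchyNumber, div_div, mul_comm, ← div_div,
      div_self (Nat.cast_ne_zero.mpr k.factorial_ne_zero), one_div]
  rw [Finset.sum_congr rfl fun α _ => by rw [coeff_eq α]]
  exact hsymm_eq_Wsum (Fin n) k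
end

section
/- For every n ≥ 1 and every partition symbol α of n, the coefficient of the monomial ∏_i x_i^{α(i)} in the Cauchy polynomial j_n equals (−1)^{α(2)+α(4)+α(6)+⋯} times the coefficient of the same monomial in k_n; in particular the coefficients of j_n and of k_n coincide in absolute value. -/
/-!
The sign automorphism `σ : xᵢ ↦ (-1)^{i+1} xᵢ` fixes `x₁` and anticommutes with `δ`
(compare `σ (δ xᵢ) = i (-1)^i xᵢ₊₁` with `δ (σ xᵢ) = i (-1)^{i+1} xᵢ₊₁`), so it carries the
recursion for `jₙ` to the recursion for `kₙ`, i.e. `σ jₙ = kₙ`. On the other hand `σ` multiplies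
the monomial `∏ xᵢ^{αᵢ}` by `∏ (-1)^{(i+1) αᵢ} = (-1)^{α₂ + α₄ + ⋯}`.
-/

open MvPolynomial

/-- The unique `ℚ`-linear derivation `δ` of `ℚ[x₁, x₂, …]` with `δ xₖ = k · xₖ₊₁`. -/
noncomputable def δ : Derivation ℚ (MvPolynomial ℕ ℚ) (MvPolynomial ℕ ℚ) :=
  mkDerivation ℚ fun k => (k : MvPolynomial ℕ ℚ) * X (k + 1)

/-- The Cauchy polynomials: `j 1 = x₁` and `j (k+1) = x₁ · j k − δ (j k)`. -/
noncomputable def cauchyJ : ℕ → MvPolynomial ℕ ℚ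
  | 0 => 1
  | k + 1 => X 1 * cauchyJ k - δ (cauchyJ k)

/-- The complementary polynomials: `k 1 = x₁` and `k (i+1) = x₁ · k i + δ (k i)`. -/
noncomputable def cauchyK : ℕ → MvPolynomial ℕ ℚ
  | 0 => 1
  | i + 1 => X 1 * cauchyK i + δ (cauchyK i)

namespace MvPolynomial

variable {σ R : Type*} [CommSemiring R]

theorem aeval_smul_X_monomial (c : σ → R) (β : σ →₀ ℕ) (a : R) :
    aeval (fun i => c i • X i) (monomial β a) =
      (β.prod fun i k => c i ^ k) • monomial β a := by
  simp_rw [aeval_monomial, monomial_eq, Finsupp.prod, smul_pow]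
  rw [Finset.prod_smul, algebraMap_eq, mul_smul_comm]

theorem coeff_aeval_smul_X (c : σ → R) (α : σ →₀ ℕ) (p : MvPolynomial σ R) :
    coeff α (aeval (fun i => c i • X i) p) = (α.prod fun i k => c i ^ k) * coeff α p := by
  induction p using MvPolynomial.induction_on' with
  | monomial β a =>
    classical
    rw [aeval_smul_X_monomial, coeff_smul, smul_eq_mul, coeff_monomial]
    split_ifs with h
    · rw [h]
    · rw [mul_zero, mul_zero]
  | add p q hp hq => rw [map_add, coeff_add, coeff_add, hp, hq, mul_add]

theorem algHom_apply_derivation_eq_of_X {A : Type*} [CommSemiring A] [Algebra R A]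
    (φ : MvPolynomial σ R →ₐ[R] A) (D : Derivation R (MvPolynomial σ R) (MvPolynomial σ R))
    (D' : Derivation R A A) (h : ∀ i, φ (D (X i)) = D' (φ (X i))) (p : MvPolynomial σ R) :
    φ (D p) = D' (φ p) := by
  induction p using MvPolynomial.induction_on with
  | C a => rw [← algebraMap_eq, Derivation.map_algebraMap, AlgHom.commutes,
      Derivation.map_algebraMap, map_zero]
  | add p q hp hq => rw [map_add, map_add, hp, hq, map_add, map_add]
  | mul_X p i hp =>
    simp only [Derivation.leibniz, smul_eq_mul, map_add, map_mul, h, hp]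

end MvPolynomial

theorem Finsupp.prod_neg_one_pow_succ_pow {M : Type*} [CommMonoid M] [HasDistribNeg M]
    (α : ℕ →₀ ℕ) :
    (α.prod fun i k => ((-1 : M) ^ (i + 1)) ^ k) =
      (-1 : M) ^ (α.sum fun i a => if Even i then a else 0) := by
  rw [Finsupp.sum, ← Finset.prod_pow_eq_pow_sum]
  refine Finset.prod_congr rfl fun i _ => ?_
  dsimp only
  rcases Nat.even_or_odd i with h | h
  · rw [if_pos h, h.add_one.neg_one_pow]
  · rw [if_neg (Nat.not_even_iff_odd.mpr h), pow_zero, h.add_one.neg_one_pow, one_pow]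

noncomputable def signFlip : MvPolynomial ℕ ℚ →ₐ[ℚ] MvPolynomial ℕ ℚ :=
  aeval fun i => ((-1 : ℚ) ^ (i + 1)) • X i

theorem coeff_signFlip (α : ℕ →₀ ℕ) (p : MvPolynomial ℕ ℚ) :
    coeff α (signFlip p) =
      (-1 : ℚ) ^ (α.sum fun i a => if Even i then a else 0) * coeff α p := by
  rw [signFlip, coeff_aeval_smul_X, Finsupp.prod_neg_one_pow_succ_pow]

theorem signFlip_X (i : ℕ) : signFlip (X i) = ((-1 : ℚ) ^ (i + 1)) • X i :=
  aeval_X _ _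

theorem δ_X (i : ℕ) : δ (X i) = (i : MvPolynomial ℕ ℚ) * X (i + 1) :=
  mkDerivation_X _ _ _

theorem signFlip_δ (p : MvPolynomial ℕ ℚ) : signFlip (δ p) = (-δ) (signFlip p) := by
  refine algHom_apply_derivation_eq_of_X signFlip δ (-δ) (fun i => ?_) p
  rw [δ_X, map_mul, map_natCast, signFlip_X, signFlip_X, Derivation.neg_apply,
    Derivation.map_smul, δ_X, pow_succ _ (i + 1), mul_neg_one, neg_smul, mul_neg,
    mul_smul_comm]

theorem signFlip_cauchyJ (n : ℕ) : signFlip (cauchyJ n) = cauchyK n := by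
  induction n with
  | zero => rw [cauchyJ, cauchyK, map_one]
  | succ n ih =>
    rw [cauchyJ, cauchyK, map_sub, map_mul, signFlip_δ, ih, signFlip_X, Derivation.neg_apply,
      sub_neg_eq_add, one_add_one_eq_two, neg_one_sq, one_smul]

theorem coeff_cauchyJ_eq_sign_mul_coeff_cauchyK_general (n : ℕ) (α : ℕ →₀ ℕ) :
    coeff α (cauchyJ n) =
        (-1 : ℚ) ^ (α.sum fun i a => if Even i then a else 0) * coeff α (cauchyK n) ∧
      |coeff α (cauchyJ n)| = |coeff α (cauchyK n)| := by
  set s : ℚ := (-1) ^ (α.sum fun i a => if Even i then a else 0)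
  have hK : coeff α (cauchyK n) = s * coeff α (cauchyJ n) := by
    rw [← signFlip_cauchyJ, coeff_signFlip]
  have hs : s * s = 1 := by rw [← mul_pow, neg_one_mul, neg_neg, one_pow]
  refine ⟨by rw [hK, ← mul_assoc, hs, one_mul], ?_⟩
  rw [hK, abs_mul, abs_neg_one_pow, one_mul]

/-- For every partition symbol `α` of `n`, the coefficient of `∏ i, xᵢ ^ α i` in `jₙ`
equals `(−1)^{α 2 + α 4 + ⋯}` times the coefficient of the same monomial in `kₙ`;
in particular the two coefficients coincide in absolute value. -/
theorem coeff_cauchyJ_eq_sign_mul_coeff_cauchyK (n : ℕ) (hn : 1 ≤ n) (α : ℕ →₀ ℕ)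
    (h0 : α 0 = 0) (hα : (α.sum fun i a => i * a) = n) :
    coeff α (cauchyJ n) =
        (-1 : ℚ) ^ (α.sum fun i a => if Even i then a else 0) * coeff α (cauchyK n) ∧
      |coeff α (cauchyJ n)| = |coeff α (cauchyK n)| :=
  coeff_cauchyJ_eq_sign_mul_coeff_cauchyK_general n α
end
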